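/- arXiv:2208.10979 — 7 statements merged into one kernel-verified Lean document; each statement's English description precedes it below -/
import Mathlib

section
/- Let a : ℝ → ℝ be continuous, strictly convex, and monotone increasing, and let F(v) = ∫₀ᵛ a(ξ) dξ. Then for all real numbers v_i ≠ v_j, one has (F(v_j) − F(v_i))·(a(v_j) − a(v_i)) < (a(v_j) + a(v_i))·(v_j − v_i)·(a(v_j) − a(v_i)) / 2. -/
/-!
On `[vi, vj]` a strictly convex function lies strictly below its chord, so its integral is strictly
smaller than the trapezoid `(a vi + a vj) (vj - vi) / 2`; multiplying by `a vj - a vi > 0` gives the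
claim, which is symmetric in `vi` and `vj`.
-/

open Set intervalIntegral

theorem StrictConvexOn.integral_lt_trapezoid {f : ℝ → ℝ} {p q : ℝ}
    (hf : StrictConvexOn ℝ (Icc p q) f) (hfc : ContinuousOn f (Icc p q)) (hpq : p < q) :
    ∫ x in p..q, f x < (f p + f q) * (q - p) / 2 := by
  -- the chord through `(p, f p)` and `(q, f q)`, scaled by `q - p`
  set chord : ℝ → ℝ := fun x => (q - x) * f p + (x - p) * f q
  have hp : p ∈ Icc p q := left_mem_Icc.2 hpq.le
  have hq : q ∈ Icc p q := right_mem_Icc.2 hpq.le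
  have below_chord : ∀ x ∈ Ioc p q, (q - p) * f x ≤ chord x := by
    rintro x ⟨hpx, hxq⟩
    rcases hxq.lt_or_eq with hxq | rfl
    · exact (hf.secant_strict_mono_aux1 hp hq hpx hxq).le
    · simp only [chord, sub_self, zero_mul, zero_add, le_refl]
  have below_chord_mid : (q - p) * f ((p + q) / 2) < chord ((p + q) / 2) :=
    hf.secant_strict_mono_aux1 hp hq (by linarith) (by linarith)
  have hlt := integral_lt_integral_of_continuousOn_of_le_of_exists_lt (f := fun x => (q - p) * f x)
    hpq (continuousOn_const.mul hfc) (by fun_prop) below_chord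
    ⟨(p + q) / 2, ⟨by linarith, by linarith⟩, below_chord_mid⟩
  have chord_integral : ∫ x in p..q, chord x = (f p + f q) * (q - p) ^ 2 / 2 := by
    simp only [chord]
    rw [integral_add ((by fun_prop : Continuous fun x => (q - x) * f p).intervalIntegrable _ _)
      ((by fun_prop : Continuous fun x => (x - p) * f q).intervalIntegrable _ _),
      integral_mul_const, integral_mul_const, integral_comp_sub_left fun x => x,
      integral_comp_sub_right fun x => x]
    simp only [integral_id]
    ring
  rw [integral_const_mul, chord_integral] at hlt
  have hqp : 0 < q - p := sub_pos.2 hpq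
  rw [← mul_lt_mul_iff_of_pos_left hqp]
  linarith

theorem stmt0 (a : ℝ → ℝ) (ha : Continuous a)
    (hconv : StrictConvexOn ℝ Set.univ a) (hmono : StrictMono a)
    (F : ℝ → ℝ) (hF : ∀ v : ℝ, F v = ∫ ξ in (0:ℝ)..v, a ξ) :
    ∀ vi vj : ℝ, vi ≠ vj →
      (F vj - F vi) * (a vj - a vi) <
        (a vj + a vi) * (vj - vi) * (a vj - a vi) / 2 := by
  intro vi vj hne
  wlog hij : vi < vj generalizing vi vj
  · have := this vj vi hne.symm (hne.lt_or_gt.resolve_left hij)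
    linarith
  have hFdiff : F vj - F vi = ∫ x in vi..vj, a x := by
    rw [hF, hF, integral_interval_sub_left (ha.intervalIntegrable _ _) (ha.intervalIntegrable _ _)]
  have htrap := (hconv.subset (subset_univ _) (convex_Icc vi vj)).integral_lt_trapezoid
    ha.continuousOn hij
  rw [hFdiff, add_comm (a vj)]
  exact (mul_lt_mul_of_pos_right htrap (sub_pos.2 (hmono hij))).trans_eq (by ring)
end

section
/- Let μ > 1, λ₁,…,λ_N > 0, and define k_i = (μΣ_{j≤i}λⱼ + Σ_{j>i}λⱼ)/((μ−1)λ_i) and t^i = (μλ₁,…,μλ_{i−1},λ_i,…,λ_N)/ξ_i where ξ_i = (μ−1)Σ_{j<i}λⱼ + Σⱼλⱼ. Suppose real numbers p, x₁,…,x_N, c₁,…,c_N satisfy x_i = p + c₁ + … + c_{i−1} + k_i c_i for all i and c₁ + … + c_N = 0. Then for every i, Σⱼ t^i_j x_j = p + c₁ + … + c_{i−1}. -/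
lemma telescope_ico (f : ℕ → ℝ) (a b : ℕ) (h : a ≤ b) :
    ∑ j ∈ Finset.Ico a b, (f (j+1) - f j) = f b - f a := by
  induction b with
  | zero =>
    have : a = 0 := Nat.le_zero.mp h
    subst this; simp
  | succ n ih =>
    rcases Nat.lt_or_ge a (n+1) with h1 | h2
    · rw [Finset.sum_Ico_succ_top (by omega), ih (by omega)]; ring
    · have : a = n+1 := by omega
      subst this; simp

theorem stmt8 (N : ℕ) (μ : ℝ) (hμ : 1 < μ)
    (l : ℕ → ℝ) (hl : ∀ j ∈ Finset.Icc 1 N, 0 < l j)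
    (k : ℕ → ℝ)
    (hk : ∀ i ∈ Finset.Icc 1 N,
      k i = (μ * ∑ j ∈ Finset.Icc 1 i, l j + ∑ j ∈ Finset.Ioc i N, l j) /
        ((μ - 1) * l i))
    (ξ : ℕ → ℝ)
    (hξ : ∀ i ∈ Finset.Icc 1 N,
      ξ i = (μ - 1) * ∑ j ∈ Finset.Ico 1 i, l j + ∑ j ∈ Finset.Icc 1 N, l j)
    (t : ℕ → ℕ → ℝ)
    (ht : ∀ i ∈ Finset.Icc 1 N, ∀ j ∈ Finset.Icc 1 N,
      t i j = (if j < i then μ * l j else l j) / ξ i)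
    (p : ℝ) (x c : ℕ → ℝ)
    (hx : ∀ i ∈ Finset.Icc 1 N,
      x i = p + (∑ j ∈ Finset.Ico 1 i, c j) + k i * c i)
    (hc : ∑ j ∈ Finset.Icc 1 N, c j = 0) :
    ∀ i ∈ Finset.Icc 1 N,
      ∑ j ∈ Finset.Icc 1 N, t i j * x j = p + ∑ j ∈ Finset.Ico 1 i, c j := by
  intro i hi
  have him := Finset.mem_Icc.mp hi
  have hμ0 : μ - 1 ≠ 0 := by linarith
  set L : ℝ := ∑ j ∈ Finset.Icc 1 N, l j with hL
  set A : ℕ → ℝ := fun m => ∑ j ∈ Finset.Ico 1 m, l j with hA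
  set S : ℕ → ℝ := fun m => ∑ j ∈ Finset.Ico 1 m, c j with hS
  -- per-term key identity
  have key : ∀ j ∈ Finset.Icc 1 N,
      l j * x j = p * l j + (A (j+1) * S (j+1) - A j * S j) + (L/(μ-1)) * c j := by
    intro j hj
    have hjm := Finset.mem_Icc.mp hj
    have hlj := (hl j hj).ne'
    have h2 : A (j+1) = ∑ m ∈ Finset.Icc 1 j, l m := by
      simp [hA, Finset.Ico_add_one_right_eq_Icc]
    have hsplit : μ * ∑ m ∈ Finset.Icc 1 j, l m + ∑ m ∈ Finset.Ioc j N, l m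
        = (μ - 1) * A (j+1) + L := by
      have hunion : Finset.Icc 1 j ∪ Finset.Ioc j N = Finset.Icc 1 N := by
        ext m; simp only [Finset.mem_union, Finset.mem_Icc, Finset.mem_Ioc]; omega
      have hdisj : Disjoint (Finset.Icc 1 j) (Finset.Ioc j N) := by
        rw [Finset.disjoint_left]
        intro m hm hm'
        simp only [Finset.mem_Icc] at hm
        simp only [Finset.mem_Ioc] at hm'
        omega
      have : L = ∑ m ∈ Finset.Icc 1 j, l m + ∑ m ∈ Finset.Ioc j N, l m := by
        rw [hL, ← hunion, Finset.sum_union hdisj]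
      rw [this, h2]; ring
    have hA1 : A (j+1) = A j + l j := Finset.sum_Ico_succ_top hjm.1 l
    have hS1 : S (j+1) = S j + c j := Finset.sum_Ico_succ_top hjm.1 c
    rw [hx j hj, hk j hj, hsplit, hA1, hS1]
    have hSj : S j = ∑ m ∈ Finset.Ico 1 j, c m := rfl
    rw [← hSj]
    field_simp
    ring
  have hS1 : S 1 = 0 := by simp [hS]
  have hSN : S (N+1) = 0 := by
    simp only [hS, Finset.Ico_add_one_right_eq_Icc]; exact hc
  -- full sum
  have base : ∑ j ∈ Finset.Icc 1 N, l j * x j = p * L := by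
    rw [Finset.sum_congr rfl key, Finset.sum_add_distrib, Finset.sum_add_distrib,
      ← Finset.Ico_add_one_right_eq_Icc, telescope_ico (fun m => A m * S m) 1 (N+1) (by omega),
      ← Finset.mul_sum, ← Finset.mul_sum, Finset.Ico_add_one_right_eq_Icc, ← hL, hc, hSN, hS1]
    ring
  -- partial sum
  have part : ∑ j ∈ Finset.Ico 1 i, l j * x j
      = p * A i + (A i * S i) + (L/(μ-1)) * S i := by
    have hsub : ∀ j ∈ Finset.Ico 1 i, l j * x j
        = p * l j + (A (j+1) * S (j+1) - A j * S j) + (L/(μ-1)) * c j := by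
      intro j hj
      have := Finset.mem_Ico.mp hj
      exact key j (Finset.mem_Icc.mpr ⟨this.1, by omega⟩)
    rw [Finset.sum_congr rfl hsub]
    rw [Finset.sum_add_distrib, Finset.sum_add_distrib]
    rw [telescope_ico (fun m => A m * S m) 1 i him.1]
    rw [← Finset.mul_sum, ← Finset.mul_sum]
    simp only [hS1]
    have : (∑ j ∈ Finset.Ico 1 i, l j) = A i := rfl
    have hc' : (∑ j ∈ Finset.Ico 1 i, c j) = S i := rfl
    rw [this, hc']
    ring
  -- ξ i positive
  have hA0 : 0 ≤ A i := by
    apply Finset.sum_nonneg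
    intro j hj
    have := Finset.mem_Ico.mp hj
    exact (hl j (Finset.mem_Icc.mpr ⟨this.1, by omega⟩)).le
  have hL0 : 0 < L := by
    apply Finset.sum_pos hl
    exact ⟨1, Finset.mem_Icc.mpr ⟨le_refl 1, him.1.trans him.2⟩⟩
  have hξi : ξ i = (μ - 1) * A i + L := hξ i hi
  have hξ0 : ξ i ≠ 0 := by
    rw [hξi]
    have : 0 ≤ (μ - 1) * A i := mul_nonneg (by linarith) hA0
    linarith
  -- main computation
  have hmain : ∑ j ∈ Finset.Icc 1 N, (if j < i then μ * l j else l j) * x j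
      = ξ i * (p + S i) := by
    have hsplit : ∀ j ∈ Finset.Icc 1 N, (if j < i then μ * l j else l j) * x j
        = (if j < i then (μ - 1) * (l j * x j) else 0) + l j * x j := by
      intro j _
      by_cases h : j < i <;> simp [h] <;> ring
    rw [Finset.sum_congr rfl hsplit, Finset.sum_add_distrib, base]
    have hfil : (Finset.Icc 1 N).filter (fun j => j < i) = Finset.Ico 1 i := by
      ext m
      simp only [Finset.mem_filter, Finset.mem_Icc, Finset.mem_Ico]
      omega
    rw [← Finset.sum_filter, hfil, ← Finset.mul_sum, part, hξi]
    field_simp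
    ring
  have hterm : ∀ j ∈ Finset.Icc 1 N,
      t i j * x j = (if j < i then μ * l j else l j) * x j / ξ i := by
    intro j hj
    rw [ht i hi j hj, div_mul_eq_mul_div]
  rw [Finset.sum_congr rfl hterm, ← Finset.sum_div, hmain, mul_comm,
    mul_div_assoc, div_self hξ0, mul_one]
end

section
/- Let μ > 1, λ₁,…,λ_N > 0 with Σⱼλⱼ = 1, k_i = (μΣ_{j≤i}λⱼ + Σ_{j>i}λⱼ)/((μ−1)λ_i). Suppose real numbers x_j, c_j and y_j, d_j satisfy x_i = c₁+…+c_{i−1}+k_i c_i, y_i = d₁+…+d_{i−1}+k_i d_i for all i, with Σⱼ cⱼ = Σⱼ dⱼ = 0. Then Σⱼ λⱼ xⱼ yⱼ = Σⱼ kⱼ(kⱼ−1) λⱼ cⱼ dⱼ. -/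
/-! With `C i = c₁ + … + c_{i-1}`, `D i = d₁ + … + d_{i-1}` and `S i = λ₁ + … + λ_i`, the
definition of `k_i` says exactly that `λ_i k_i = a + S_i` with `a = (λ₁ + … + λ_N)/(μ-1)`.
Under this relation `λ_i x_i y_i - k_i (k_i - 1) λ_i c_i d_i` is the increment of
`(a + S_{i-1}) C_i D_i`, so the difference of the two sums telescopes to
`(a + S_N) C_{N+1} D_{N+1}`, which vanishes as `C_{N+1} = ∑ c_j = 0`. -/

open Finset

lemma Finset.sum_Icc_one_add_sum_Ioc {M : Type*} [AddCommMonoid M] (f : ℕ → M) {i N : ℕ}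
    (hiN : i ≤ N) : ∑ j ∈ Icc 1 i, f j + ∑ j ∈ Ioc i N, f j = ∑ j ∈ Icc 1 N, f j := by
  rw [← zero_add 1, Icc_add_one_left_eq_Ioc, Icc_add_one_left_eq_Ioc,
    sum_Ioc_consecutive f (Nat.zero_le i) hiN]

lemma mul_div_sub_one_mul_eq {K : Type*} [Field K] {μ l S T : K} (hμ : μ ≠ 1) (hl : l ≠ 0) :
    l * ((μ * S + (T - S)) / ((μ - 1) * l)) = T / (μ - 1) + S := by
  have : μ - 1 ≠ 0 := sub_ne_zero.mpr hμ
  field_simp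
  ring

theorem sum_mul_prefix_mul_prefix_eq {R : Type*} [CommRing R] (N : ℕ) (a : R)
    (l k x c y d : ℕ → R)
    (hlk : ∀ i ∈ Icc 1 N, l i * k i = a + ∑ j ∈ Icc 1 i, l j)
    (hx : ∀ i ∈ Icc 1 N, x i = ∑ j ∈ Ico 1 i, c j + k i * c i)
    (hy : ∀ i ∈ Icc 1 N, y i = ∑ j ∈ Ico 1 i, d j + k i * d i) :
    ∑ i ∈ Icc 1 N, l i * x i * y i =
      ∑ i ∈ Icc 1 N, k i * (k i - 1) * l i * c i * d i +
        (a + ∑ j ∈ Icc 1 N, l j) * (∑ j ∈ Icc 1 N, c j) * ∑ j ∈ Icc 1 N, d j := by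
  induction N with
  | zero => simp
  | succ n ih =>
    have hsub : Icc 1 n ⊆ Icc 1 (n + 1) := Icc_subset_Icc_right n.le_succ
    have hn : n + 1 ∈ Icc 1 (n + 1) := by simp
    have h1 : 1 ≤ n + 1 := by omega
    have hw := hlk _ hn
    simp only [sum_Icc_succ_top h1] at hw ⊢
    rw [ih (fun i hi => hlk i (hsub hi)) (fun i hi => hx i (hsub hi)) (fun i hi => hy i (hsub hi)),
      hx _ hn, hy _ hn, Finset.Ico_add_one_right_eq_Icc]
    linear_combination
      ((∑ j ∈ Icc 1 n, c j) * d (n + 1) + c (n + 1) * ∑ j ∈ Icc 1 n, d j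
        + c (n + 1) * d (n + 1)) * hw

theorem stmt9_general (N : ℕ) (μ : ℝ) (hμ : 1 < μ)
    (l : ℕ → ℝ) (hl : ∀ j ∈ Finset.Icc 1 N, 0 < l j)
    (k : ℕ → ℝ)
    (hk : ∀ i ∈ Finset.Icc 1 N,
      k i = (μ * ∑ j ∈ Finset.Icc 1 i, l j + ∑ j ∈ Finset.Ioc i N, l j) /
        ((μ - 1) * l i))
    (x c y d : ℕ → ℝ)
    (hx : ∀ i ∈ Finset.Icc 1 N,
      x i = (∑ j ∈ Finset.Ico 1 i, c j) + k i * c i)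
    (hy : ∀ i ∈ Finset.Icc 1 N,
      y i = (∑ j ∈ Finset.Ico 1 i, d j) + k i * d i)
    (hc : ∑ j ∈ Finset.Icc 1 N, c j = 0) :
    ∑ j ∈ Finset.Icc 1 N, l j * x j * y j =
      ∑ j ∈ Finset.Icc 1 N, k j * (k j - 1) * l j * c j * d j := by
  have hlk : ∀ i ∈ Icc 1 N,
      l i * k i = (∑ j ∈ Icc 1 N, l j) / (μ - 1) + ∑ j ∈ Icc 1 i, l j := by
    intro i hi
    rw [hk i hi, eq_sub_of_add_eq' (sum_Icc_one_add_sum_Ioc l (mem_Icc.mp hi).2)]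
    exact mul_div_sub_one_mul_eq hμ.ne' (hl i hi).ne'
  rw [sum_mul_prefix_mul_prefix_eq N _ l k x c y d hlk hx hy, hc, mul_zero, zero_mul, add_zero]

theorem stmt9 (N : ℕ) (μ : ℝ) (hμ : 1 < μ)
    (l : ℕ → ℝ) (hl : ∀ j ∈ Finset.Icc 1 N, 0 < l j)
    (hsum : ∑ j ∈ Finset.Icc 1 N, l j = 1)
    (k : ℕ → ℝ)
    (hk : ∀ i ∈ Finset.Icc 1 N,
      k i = (μ * ∑ j ∈ Finset.Icc 1 i, l j + ∑ j ∈ Finset.Ioc i N, l j) /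
        ((μ - 1) * l i))
    (x c y d : ℕ → ℝ)
    (hx : ∀ i ∈ Finset.Icc 1 N,
      x i = (∑ j ∈ Finset.Ico 1 i, c j) + k i * c i)
    (hy : ∀ i ∈ Finset.Icc 1 N,
      y i = (∑ j ∈ Finset.Ico 1 i, d j) + k i * d i)
    (hc : ∑ j ∈ Finset.Icc 1 N, c j = 0)
    (hd : ∑ j ∈ Finset.Icc 1 N, d j = 0) :
    ∑ j ∈ Finset.Icc 1 N, l j * x j * y j =
      ∑ j ∈ Finset.Icc 1 N, k j * (k j - 1) * l j * c j * d j :=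
  stmt9_general N μ hμ l hl k hk x c y d hx hy hc
end

section
/- Let μ > 1, λ₁,…,λ_N > 0 with Σⱼλⱼ = 1, k_i = (μΣ_{j≤i}λⱼ + Σ_{j>i}λⱼ)/((μ−1)λ_i), t^i = (μλ₁,…,μλ_{i−1},λ_i,…,λ_N)/ξ_i with ξ_i = (μ−1)Σ_{j<i}λⱼ + 1. Suppose x_i = p + c₁+…+c_{i−1}+k_i c_i and y_i = q + d₁+…+d_{i−1}+k_i d_i for all i, with Σⱼcⱼ = Σⱼdⱼ = 0. Then Σⱼ t^i_j xⱼ yⱼ = Σⱼ kⱼ(kⱼ−1) t^i_j cⱼ dⱼ + (Σ_{j<i} cⱼ)(Σ_{k<i} d_k) + pq + p Σ_{j<i} dⱼ + q Σ_{j<i} cⱼ. -/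
theorem stmt10 (N : ℕ) (μ : ℝ) (hμ : 1 < μ)
    (l : ℕ → ℝ) (hl : ∀ j ∈ Finset.Icc 1 N, 0 < l j)
    (hsum : ∑ j ∈ Finset.Icc 1 N, l j = 1)
    (k : ℕ → ℝ)
    (hk : ∀ i ∈ Finset.Icc 1 N,
      k i = (μ * ∑ j ∈ Finset.Icc 1 i, l j + ∑ j ∈ Finset.Ioc i N, l j) /
        ((μ - 1) * l i))
    (ξ : ℕ → ℝ)
    (hξ : ∀ i ∈ Finset.Icc 1 N, ξ i = (μ - 1) * (∑ j ∈ Finset.Ico 1 i, l j) + 1)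
    (t : ℕ → ℕ → ℝ)
    (ht : ∀ i ∈ Finset.Icc 1 N, ∀ j ∈ Finset.Icc 1 N,
      t i j = (if j < i then μ * l j else l j) / ξ i)
    (p q : ℝ) (x c y d : ℕ → ℝ)
    (hx : ∀ i ∈ Finset.Icc 1 N,
      x i = p + (∑ j ∈ Finset.Ico 1 i, c j) + k i * c i)
    (hy : ∀ i ∈ Finset.Icc 1 N,
      y i = q + (∑ j ∈ Finset.Ico 1 i, d j) + k i * d i)
    (hc : ∑ j ∈ Finset.Icc 1 N, c j = 0)
    (hd : ∑ j ∈ Finset.Icc 1 N, d j = 0) :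
    ∀ i ∈ Finset.Icc 1 N,
      ∑ j ∈ Finset.Icc 1 N, t i j * x j * y j =
        (∑ j ∈ Finset.Icc 1 N, k j * (k j - 1) * t i j * c j * d j) +
          (∑ j ∈ Finset.Ico 1 i, c j) * (∑ j ∈ Finset.Ico 1 i, d j) +
          p * q + p * (∑ j ∈ Finset.Ico 1 i, d j) +
          q * (∑ j ∈ Finset.Ico 1 i, c j) := by
  intro i hi
  obtain ⟨hi1, hiN⟩ := Finset.mem_Icc.mp hi
  have hμ1 : (0:ℝ) < μ - 1 := by linarith
  obtain ⟨S, hS⟩ : ∃ S : ℕ → ℝ, ∀ j, S j = ∑ m ∈ Finset.Icc 1 j, l m :=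
    ⟨_, fun _ => rfl⟩
  obtain ⟨A, hA⟩ : ∃ A : ℕ → ℝ, ∀ j, A j = (μ - 1) * S j + 1 :=
    ⟨_, fun _ => rfl⟩
  obtain ⟨W, hW⟩ : ∃ W : ℕ → ℝ, ∀ j,
      W j = (p + ∑ m ∈ Finset.Ico 1 j, c m) * (q + ∑ m ∈ Finset.Ico 1 j, d m) :=
    ⟨_, fun _ => rfl⟩
  obtain ⟨G, hG⟩ : ∃ G : ℕ → ℝ, ∀ j,
      G j = (if j < i then μ else 1) * A j / ((μ - 1) * A (i - 1)) :=
    ⟨_, fun _ => rfl⟩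
  -- positivity facts
  have hSnn : ∀ j, j ≤ N → 0 ≤ S j := by
    intro j hj
    rw [hS]
    refine Finset.sum_nonneg fun m hm => ?_
    obtain ⟨h1, h2⟩ := Finset.mem_Icc.mp hm
    exact le_of_lt (hl m (Finset.mem_Icc.mpr ⟨h1, le_trans h2 hj⟩))
  have hApos : ∀ j, j ≤ N → 0 < A j := by
    intro j hj
    have := hSnn j hj
    rw [hA]
    nlinarith
  have hA' : A (i - 1) ≠ 0 := ne_of_gt (hApos _ (le_trans (Nat.sub_le i 1) hiN))
  -- step identities
  have hSstep : ∀ j, 1 ≤ j → S j = S (j - 1) + l j := by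
    intro j hj
    obtain ⟨m, rfl⟩ := Nat.exists_eq_add_of_le hj
    rw [hS, hS, show 1 + m = m + 1 by omega, show m + 1 - 1 = m by omega]
    exact Finset.sum_Icc_succ_top (by omega) l
  have hAstep : ∀ j, 1 ≤ j → A j = A (j - 1) + (μ - 1) * l j := by
    intro j hj
    rw [hA, hA, hSstep j hj]; ring
  -- closed form for k
  have hkj : ∀ j ∈ Finset.Icc 1 N, k j = A j / ((μ - 1) * l j) := by
    intro j hj
    obtain ⟨hj1, hjN⟩ := Finset.mem_Icc.mp hj
    have hsplit : S j + ∑ m ∈ Finset.Ioc j N, l m = 1 := by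
      rw [hS]
      have e1 : Finset.Icc 1 j = Finset.Ioc 0 j := by rw [← Finset.Icc_add_one_left_eq_Ioc]; rfl
      have e2 : Finset.Icc 1 N = Finset.Ioc 0 N := by rw [← Finset.Icc_add_one_left_eq_Ioc]; rfl
      rw [e1, Finset.sum_Ioc_consecutive l (Nat.zero_le j) hjN, ← e2, hsum]
    have hIoc : ∑ m ∈ Finset.Ioc j N, l m = 1 - S j := by linarith
    rw [hk j hj, hIoc, hA, ← hS]
    ring_nf
  -- closed form for t i j
  have hIcoS : (∑ m ∈ Finset.Ico 1 i, l m) = S (i - 1) := by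
    rw [hS, show i = (i - 1) + 1 by omega, Finset.Ico_add_one_right_eq_Icc,
      show i - 1 + 1 - 1 = i - 1 by omega]
  have htj : ∀ j ∈ Finset.Icc 1 N, t i j = (if j < i then μ else 1) * l j / A (i - 1) := by
    intro j hj
    rw [ht i hi j hj, hξ i hi, hIcoS, ← hA]
    split_ifs <;> ring
  -- coefficient identities
  have htk : ∀ j ∈ Finset.Icc 1 N, t i j * k j = G j := by
    intro j hj
    have hlj : l j ≠ 0 := ne_of_gt (hl j hj)
    rw [htj j hj, hkj j hj, hG]
    field_simp
  have htk1 : ∀ j ∈ Finset.Icc 1 N, G (j - 1) = t i j * (k j - 1) + (if j = i then 1 else 0) := by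
    intro j hj
    obtain ⟨hj1, hjN⟩ := Finset.mem_Icc.mp hj
    have hlj : l j ≠ 0 := ne_of_gt (hl j hj)
    have hAj : A (j - 1) = A j - (μ - 1) * l j := by rw [hAstep j hj1]; ring
    rcases lt_trichotomy j i with h | h | h
    · have h1 : j - 1 < i := by omega
      have h2 : j ≠ i := by omega
      rw [htj j hj, hkj j hj, hG, hAj]
      simp only [if_pos h, if_pos h1, if_neg h2]
      field_simp
      ring
    · subst h
      have h1 : j - 1 < j := by omega
      have h2 : ¬ (j < j) := lt_irrefl j
      rw [htj j hj, hkj j hj, hG, hAstep j hj1]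
      simp only [if_pos h1, if_neg h2, if_pos rfl, ↓reduceIte]
      field_simp
      ring
    · have h1 : ¬ (j - 1 < i) := by omega
      have h2 : ¬ (j < i) := by omega
      have h3 : j ≠ i := by omega
      rw [htj j hj, hkj j hj, hG, hAj]
      simp only [if_neg h1, if_neg h2, if_neg h3]
      field_simp
      ring
  -- pointwise key identity
  have key : ∀ j ∈ Finset.Icc 1 N,
      t i j * x j * y j =
        k j * (k j - 1) * t i j * c j * d j +
        (G j * W (j + 1) - G (j - 1) * W j) + (if j = i then W j else 0) := by
    intro j hj
    obtain ⟨hj1, hjN⟩ := Finset.mem_Icc.mp hj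
    have hW1 : W (j + 1) =
        ((p + ∑ m ∈ Finset.Ico 1 j, c m) + c j) * ((q + ∑ m ∈ Finset.Ico 1 j, d m) + d j) := by
      rw [hW, Finset.sum_Ico_succ_top hj1, Finset.sum_Ico_succ_top hj1]
      ring
    rw [htk1 j hj, ← htk j hj, hW1, hW, hx j hj, hy j hj]
    split_ifs <;> ring
  -- sum it up
  rw [Finset.sum_congr rfl key]
  rw [Finset.sum_add_distrib, Finset.sum_add_distrib]
  have htel : ∑ j ∈ Finset.Icc 1 N, (G j * W (j + 1) - G (j - 1) * W j)
      = G N * W (N + 1) - G 0 * W 1 := by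
    have hrs := Finset.sum_range_sub (fun m => G m * W (m + 1)) N
    rw [← Finset.Ico_add_one_right_eq_Icc, Finset.sum_Ico_eq_sum_range,
      show N + 1 - 1 = N by omega, ← hrs]
    refine Finset.sum_congr rfl fun m _ => ?_
    rw [show 1 + m - 1 = m by omega, show 1 + m = m + 1 by omega]
  have hzero : G N * W (N + 1) - G 0 * W 1 = 0 := by
    have hWN : W (N + 1) = W 1 := by
      rw [hW, hW, Finset.Ico_add_one_right_eq_Icc, hc, hd]
      simp
    have hGN : G N = G 0 := by
      have hAN : A N = μ := by rw [hA, hS, hsum]; ring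
      have hA0 : A 0 = 1 := by
        rw [hA, hS]
        simp
      rw [hG, hG, hAN, hA0, if_neg (by omega : ¬ N < i), if_pos (by omega : 0 < i)]
      ring
    rw [hWN, hGN]
    ring
  have hite : ∑ j ∈ Finset.Icc 1 N, (if j = i then W j else 0) = W i := by
    rw [Finset.sum_ite_eq' (Finset.Icc 1 N) i W, if_pos hi]
  rw [htel, hzero, hite, hW]
  ring
end

section
/- Let S₁,…,S_N and T₁,…,T_N be symmetric 2×2 matrices and C₁,…,C_N symmetric rank-one 2×2 matrices with Σⱼ Cⱼ = 0, where S_β = Σ_{α<β} m_α cof C_α and T_β = Σ_{α>β} m_α cof C_α for some m_α ≥ 0, and let μ > 1, k_i > 1. Define (⋆)_i = −μ Σ_{β<i} ⟨S_β, C_β⟩ + Σ_{β>i} ⟨T_β, C_β⟩ − μ k_i ⟨S_i, C_i⟩ + (1 − k_i) ⟨T_i, C_i⟩. If there exists j₀ such that C_{j₀} is positive semi-definite and C_j is negative semi-definite for all j ≠ j₀, then (⋆)_{j₀} ≤ 0. -/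
/-- The cofactor matrix of a 2×2 real matrix. -/
def cof (A : Matrix (Fin 2) (Fin 2) ℝ) : Matrix (Fin 2) (Fin 2) ℝ :=
  !![A 1 1, -(A 1 0); -(A 0 1), A 0 0]

/-- The Hilbert–Schmidt (Frobenius) inner product on 2×2 real matrices. -/
def frob (M N : Matrix (Fin 2) (Fin 2) ℝ) : ℝ :=
  ∑ i : Fin 2, ∑ j : Fin 2, M i j * N i j

lemma frob_cof_eq_det {A B : Matrix (Fin 2) (Fin 2) ℝ} :
    frob (cof A) B = (A + B).det - A.det - B.det := by
  simp [frob, cof, Fin.sum_univ_two, Matrix.det_fin_two, Matrix.add_apply]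
  ring

lemma det_zero_of_null {A : Matrix (Fin 2) (Fin 2) ℝ} {u : Fin 2 → ℝ}
    (hu : u ≠ 0) (hA : A.mulVec u = 0) : A.det = 0 :=
  Matrix.exists_mulVec_eq_zero_iff.mp ⟨u, hu, hA⟩

lemma frob_cof_zero {A B : Matrix (Fin 2) (Fin 2) ℝ} {u : Fin 2 → ℝ}
    (hu : u ≠ 0) (hA : A.mulVec u = 0) (hB : B.mulVec u = 0) :
    frob (cof A) B = 0 := by
  rw [frob_cof_eq_det, det_zero_of_null hu hA, det_zero_of_null hu hB,
    det_zero_of_null hu (by rw [Matrix.add_mulVec, hA, hB, add_zero])]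
  ring

lemma frob_sum_left (s : Finset ℕ) (f : ℕ → Matrix (Fin 2) (Fin 2) ℝ)
    (B : Matrix (Fin 2) (Fin 2) ℝ) :
    frob (∑ α ∈ s, f α) B = ∑ α ∈ s, frob (f α) B := by
  simp only [frob, Matrix.sum_apply, Finset.sum_mul]
  rw [Finset.sum_comm (s := s)]
  refine Finset.sum_congr rfl fun i _ => ?_
  rw [Finset.sum_comm (s := s)]

lemma frob_smul_left (c : ℝ) (M B : Matrix (Fin 2) (Fin 2) ℝ) :
    frob (c • M) B = c * frob M B := by
  simp [frob, Fin.sum_univ_two]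
  ring

lemma quad_sum (s : Finset ℕ) (f : ℕ → Matrix (Fin 2) (Fin 2) ℝ) (u : Fin 2 → ℝ) :
    dotProduct u ((∑ j ∈ s, f j).mulVec u) =
      ∑ j ∈ s, dotProduct u ((f j).mulVec u) := by
  classical
  induction s using Finset.induction with
  | empty => simp
  | insert _ _ h ih =>
    rw [Finset.sum_insert h, Finset.sum_insert h, Matrix.add_mulVec,
      dotProduct_add, ih]

theorem stmt15 (N : ℕ) (C : ℕ → Matrix (Fin 2) (Fin 2) ℝ)
    (hsymm : ∀ j ∈ Finset.Icc 1 N, (C j).IsSymm)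
    (hrank : ∀ j ∈ Finset.Icc 1 N, (C j).rank = 1)
    (hCsum : ∑ j ∈ Finset.Icc 1 N, C j = 0)
    (m : ℕ → ℝ) (hm : ∀ α ∈ Finset.Icc 1 N, 0 ≤ m α)
    (S T : ℕ → Matrix (Fin 2) (Fin 2) ℝ)
    (hS : ∀ β, S β = ∑ α ∈ Finset.Ico 1 β, m α • cof (C α))
    (hT : ∀ β, T β = ∑ α ∈ Finset.Ioc β N, m α • cof (C α))
    (μ : ℝ) (hμ : 1 < μ)
    (k : ℕ → ℝ) (hk : ∀ i ∈ Finset.Icc 1 N, 1 < k i)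
    (star : ℕ → ℝ)
    (hstar : ∀ i, star i =
      -μ * (∑ β ∈ Finset.Ico 1 i, frob (S β) (C β)) +
        (∑ β ∈ Finset.Ioc i N, frob (T β) (C β)) -
        μ * k i * frob (S i) (C i) + (1 - k i) * frob (T i) (C i))
    (j0 : ℕ) (hj0 : j0 ∈ Finset.Icc 1 N)
    (hpos : (C j0).PosSemidef)
    (hneg : ∀ j ∈ Finset.Icc 1 N, j ≠ j0 → (-(C j)).PosSemidef) :
    star j0 ≤ 0 := by
  obtain ⟨hj01, hj0N⟩ := Finset.mem_Icc.mp hj0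
  -- C j0 is singular since its rank is 1 ≠ 2.
  have hdet : (C j0).det = 0 := by
    by_contra hdet
    have := Matrix.rank_of_isUnit (C j0)
      ((Matrix.isUnit_iff_isUnit_det _).mpr (isUnit_iff_ne_zero.mpr hdet))
    rw [hrank j0 hj0] at this
    simp at this
  obtain ⟨u, hu0, huC⟩ : ∃ v ≠ 0, (C j0).mulVec v = 0 :=
    Matrix.exists_mulVec_eq_zero_iff.mpr hdet
  -- every C j kills u
  have hnull : ∀ j ∈ Finset.Icc 1 N, (C j).mulVec u = 0 := by
    have hsum0 : ∑ j ∈ Finset.Icc 1 N,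
        dotProduct u ((C j).mulVec u) = 0 := by
      rw [← quad_sum, hCsum]
      simp
    have hterm : ∀ j ∈ Finset.Icc 1 N, dotProduct u ((C j).mulVec u) = 0 := by
      have hj0term : dotProduct u ((C j0).mulVec u) = 0 := by rw [huC]; simp
      have hnonneg : ∀ j ∈ Finset.Icc 1 N,
          0 ≤ -(dotProduct u ((C j).mulVec u)) := by
        intro j hj
        by_cases hje : j = j0
        · rw [hje, hj0term]; simp
        · have := (hneg j hj hje).dotProduct_mulVec_nonneg u
          simpa only [Matrix.neg_mulVec, dotProduct_neg, star_trivial] using this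
      have hsum' : ∑ j ∈ Finset.Icc 1 N,
          -(dotProduct u ((C j).mulVec u)) = 0 := by
        rw [Finset.sum_neg_distrib, hsum0, neg_zero]
      intro j hj
      have := (Finset.sum_eq_zero_iff_of_nonneg hnonneg).mp hsum' j hj
      linarith
    intro j hj
    by_cases hje : j = j0
    · rw [hje]; exact huC
    · have h0 : dotProduct (Star.star u) ((-(C j)).mulVec u) = 0 := by
        have := hterm j hj
        simp only [Matrix.neg_mulVec, dotProduct_neg, star_trivial]
        rw [this, neg_zero]
      have := ((hneg j hj hje).dotProduct_mulVec_zero_iff u).mp h0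
      rw [Matrix.neg_mulVec] at this
      exact neg_eq_zero.mp this
  -- every frob (cof (C α)) (C β) is 0 for α β in range
  have hfz : ∀ α ∈ Finset.Icc 1 N, ∀ β ∈ Finset.Icc 1 N,
      frob (cof (C α)) (C β) = 0 := fun α hα β hβ =>
    frob_cof_zero hu0 (hnull α hα) (hnull β hβ)
  have hSz : ∀ β ∈ Finset.Icc 1 N, frob (S β) (C β) = 0 := by
    intro β hβ
    rw [hS, frob_sum_left]
    refine Finset.sum_eq_zero fun α hα => ?_
    rw [frob_smul_left]
    obtain ⟨hα1, hα2⟩ := Finset.mem_Ico.mp hα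
    have hαm : α ∈ Finset.Icc 1 N :=
      Finset.mem_Icc.mpr ⟨hα1, le_trans (Nat.le_of_lt hα2) (Finset.mem_Icc.mp hβ).2⟩
    rw [hfz α hαm β hβ, mul_zero]
  have hTz : ∀ β ∈ Finset.Icc 1 N, frob (T β) (C β) = 0 := by
    intro β hβ
    rw [hT, frob_sum_left]
    refine Finset.sum_eq_zero fun α hα => ?_
    rw [frob_smul_left]
    obtain ⟨hα1, hα2⟩ := Finset.mem_Ioc.mp hα
    have hαm : α ∈ Finset.Icc 1 N :=
      Finset.mem_Icc.mpr ⟨le_trans (Finset.mem_Icc.mp hβ).1 (Nat.le_of_lt hα1), hα2⟩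
    rw [hfz α hαm β hβ, mul_zero]
  have h1 : ∑ β ∈ Finset.Ico 1 j0, frob (S β) (C β) = 0 := by
    refine Finset.sum_eq_zero fun β hβ => ?_
    obtain ⟨hβ1, hβ2⟩ := Finset.mem_Ico.mp hβ
    exact hSz β (Finset.mem_Icc.mpr ⟨hβ1, le_trans (Nat.le_of_lt hβ2) hj0N⟩)
  have h2 : ∑ β ∈ Finset.Ioc j0 N, frob (T β) (C β) = 0 := by
    refine Finset.sum_eq_zero fun β hβ => ?_
    obtain ⟨hβ1, hβ2⟩ := Finset.mem_Ioc.mp hβ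
    exact hTz β (Finset.mem_Icc.mpr ⟨le_trans hj01 (Nat.le_of_lt hβ1), hβ2⟩)
  rw [hstar, h1, h2, hSz j0 hj0, hTz j0 hj0]
  ring_nf
  simp
end

section
/- Let a : ℝ → ℝ be C¹, strictly convex, increasing with a(0) = 0, and F(v) = ∫₀ᵛ a. Suppose {X₁,…,X_N} ⊂ K_a induces a T_N configuration, i.e. there exist μ > 1 and positive weights t^i_j (summing to 1 in j) with Σⱼ t^i_j det(X_j^Z − X_i^Z) = 0 for all i and all 2×2 minors Z of 3×2 matrices, where X_i = [[a(v_i), u_i],[u_i, v_i],[u_i a(v_i), u_i²/2 + F(v_i)]]. Then not all v_i are equal. -/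
theorem stmt17 (N : ℕ) (hN : 2 ≤ N)
    (a : ℝ → ℝ) (ha : ContDiff ℝ 1 a)
    (hconv : StrictConvexOn ℝ Set.univ a) (hmono : StrictMono a) (ha0 : a 0 = 0)
    (F : ℝ → ℝ) (hF : ∀ v : ℝ, F v = ∫ ξ in (0:ℝ)..v, a ξ)
    (u v : ℕ → ℝ) (X : ℕ → Matrix (Fin 3) (Fin 2) ℝ)
    (hX : ∀ i ∈ Finset.Icc 1 N,
      X i = Matrix.of
        ![![a (v i), u i], ![u i, v i], ![u i * a (v i), (u i) ^ 2 / 2 + F (v i)]])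
    (hdist : ∀ i ∈ Finset.Icc 1 N, ∀ j ∈ Finset.Icc 1 N, i ≠ j → X i ≠ X j)
    (μ : ℝ) (hμ : 1 < μ)
    (t : ℕ → ℕ → ℝ)
    (ht : ∀ i ∈ Finset.Icc 1 N, ∀ j ∈ Finset.Icc 1 N, 0 < t i j)
    (htsum : ∀ i ∈ Finset.Icc 1 N, ∑ j ∈ Finset.Icc 1 N, t i j = 1)
    (hdet : ∀ i ∈ Finset.Icc 1 N, ∀ r1 r2 : Fin 3,
      ∑ j ∈ Finset.Icc 1 N,
        t i j * ((X j - X i).submatrix ![r1, r2] id).det = 0) :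
    ∃ i ∈ Finset.Icc 1 N, ∃ j ∈ Finset.Icc 1 N, v i ≠ v j := by
  by_contra h
  push_neg at h
  have h1 : (1:ℕ) ∈ Finset.Icc 1 N := by simp; omega
  have h2 : (2:ℕ) ∈ Finset.Icc 1 N := by simp; omega
  have hv : ∀ j ∈ Finset.Icc 1 N, v j = v 1 := fun j hj => h j hj 1 h1
  have hdet0 := hdet 1 h1 0 1
  have key : ∀ j ∈ Finset.Icc 1 N,
      t 1 j * ((X j - X 1).submatrix ![(0 : Fin 3), 1] id).det
        = -(t 1 j * (u j - u 1) ^ 2) := by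
    intro j hj
    rw [hX j hj, hX 1 h1]
    have hvj := hv j hj
    simp only [Matrix.det_fin_two, Matrix.submatrix_apply, Matrix.sub_apply,
      Matrix.cons_val', Matrix.cons_val_zero, Matrix.cons_val_one, Matrix.head_cons,
      Matrix.of_apply, Matrix.cons_val_fin_one, Matrix.head_fin_const, id_eq, hvj]
    ring
  rw [Finset.sum_congr rfl key] at hdet0
  rw [Finset.sum_neg_distrib, neg_eq_zero] at hdet0
  have hu : ∀ j ∈ Finset.Icc 1 N, u j = u 1 := by
    intro j hj
    have := (Finset.sum_eq_zero_iff_of_nonneg (fun j hj =>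
      mul_nonneg (ht 1 h1 j hj).le (sq_nonneg _))).1 hdet0 j hj
    have h2' : (u j - u 1) ^ 2 = 0 := by
      rcases mul_eq_zero.1 this with h' | h'
      · exact absurd h' (ht 1 h1 j hj).ne'
      · exact h'
    have := pow_eq_zero_iff (n := 2) (by norm_num) |>.1 h2'
    linarith
  apply hdist 1 h1 2 h2 (by omega)
  rw [hX 1 h1, hX 2 h2, hv 2 h2, hu 2 h2]
end

section
/- Let a be C¹, strictly convex, increasing, a(0) = 0, F = ∫₀· a. Suppose for fixed i there are positive weights tⱼ (j = 1,…,N) with Σⱼ tⱼ det(X_j^{Z₁₃} − X_i^{Z₁₃}) = 0 and Σⱼ tⱼ det(X_j^{Z₁₂} − X_i^{Z₁₂}) = 0, where X_j = [[a(v_j), u_j],[u_j, v_j],[u_j a(v_j), u_j²/2 + F(v_j)]], Z₁₂ selects rows 1,2 and Z₁₃ selects rows 1,3, and not all v_j are equal. Then Σⱼ tⱼ a(v_j) det(X_j^{Z₁₂} − X_i^{Z₁₂}) > 0. -/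
open intervalIntegral in
theorem trap_aux (a : ℝ → ℝ) (hc : Continuous a) (hconv : StrictConvexOn ℝ Set.univ a)
    {x y : ℝ} (hxy : x < y) : 2 * ∫ ξ in x..y, a ξ < (a x + a y) * (y - x) := by
  have hyx : (0:ℝ) < y - x := by linarith
  have hpos : 0 < ∫ ξ in x..y, (a x + (a y - a x)/(y - x) * (ξ - x) - a ξ) := by
    apply intervalIntegral_pos_of_pos_on
    · apply IntervalIntegrable.sub _ (hc.intervalIntegrable x y)
      apply Continuous.intervalIntegrable
      continuity
    · intro ξ hξ
      have ht0 : 0 < (ξ - x)/(y - x) := div_pos (by linarith [hξ.1]) hyx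
      have ht1 : (ξ - x)/(y - x) < 1 := (div_lt_one hyx).2 (by linarith [hξ.2])
      have h := hconv.2 (Set.mem_univ x) (Set.mem_univ y) (ne_of_lt hxy)
        (by linarith : (0:ℝ) < 1 - (ξ - x)/(y - x)) ht0 (by ring)
      have hxi : (1 - (ξ - x)/(y - x)) • x + ((ξ - x)/(y - x)) • y = ξ := by
        have hne : y - x ≠ 0 := hyx.ne'
        rw [smul_eq_mul, smul_eq_mul]
        field_simp; ring
      rw [hxi] at h
      simp only [smul_eq_mul] at h
      have key : (1 - (ξ - x) / (y - x)) * a x + (ξ - x) / (y - x) * a y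
          = a x + (a y - a x)/(y - x) * (ξ - x) := by ring
      linarith [h, key.le]
    · exact hxy
  have h1 : ∫ ξ in x..y, (a x + (a y - a x)/(y - x) * (ξ - x) - a ξ)
      = (a x) * (y - x) + (a y - a x)/(y - x) * ((y - x)^2/2) - ∫ ξ in x..y, a ξ := by
    rw [intervalIntegral.integral_sub, intervalIntegral.integral_add]
    · rw [intervalIntegral.integral_const]
      have h2 : ∫ ξ in x..y, ((a y - a x)/(y - x) * (ξ - x)) = (a y - a x)/(y - x) * ((y - x)^2/2) := by
        rw [intervalIntegral.integral_const_mul]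
        congr 1
        rw [intervalIntegral.integral_sub intervalIntegrable_id (intervalIntegrable_const),
          integral_id, intervalIntegral.integral_const, smul_eq_mul]
        ring
      rw [h2, smul_eq_mul]; ring_nf
    · exact intervalIntegrable_const
    · apply Continuous.intervalIntegrable; continuity
    · apply Continuous.intervalIntegrable; continuity
    · exact hc.intervalIntegrable x y
  rw [h1] at hpos
  have h3 : (a y - a x)/(y - x) * ((y - x)^2/2) = (a y - a x) * (y - x) / 2 := by
    field_simp
  nlinarith [hpos]

theorem stmt19 (N : ℕ)
    (a : ℝ → ℝ) (ha : ContDiff ℝ 1 a)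
    (hconv : StrictConvexOn ℝ Set.univ a) (hmono : StrictMono a) (ha0 : a 0 = 0)
    (F : ℝ → ℝ) (hF : ∀ v : ℝ, F v = ∫ ξ in (0:ℝ)..v, a ξ)
    (u v : ℕ → ℝ) (X : ℕ → Matrix (Fin 3) (Fin 2) ℝ)
    (hX : ∀ j ∈ Finset.Icc 1 N,
      X j = Matrix.of
        ![![a (v j), u j], ![u j, v j], ![u j * a (v j), (u j) ^ 2 / 2 + F (v j)]])
    (i : ℕ) (hi : i ∈ Finset.Icc 1 N)
    (t : ℕ → ℝ) (ht : ∀ j ∈ Finset.Icc 1 N, 0 < t j)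
    (h13 : ∑ j ∈ Finset.Icc 1 N,
      t j * ((X j - X i).submatrix ![0, 2] id).det = 0)
    (h12 : ∑ j ∈ Finset.Icc 1 N,
      t j * ((X j - X i).submatrix ![0, 1] id).det = 0)
    (hv : ∃ j ∈ Finset.Icc 1 N, ∃ l ∈ Finset.Icc 1 N, v j ≠ v l) :
    0 < ∑ j ∈ Finset.Icc 1 N,
      t j * a (v j) * ((X j - X i).submatrix ![0, 1] id).det := by
  have hc : Continuous a := ha.continuous
  -- F increments are integrals
  have hFd : ∀ x y : ℝ, F y - F x = ∫ ξ in x..y, a ξ := by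
    intro x y
    rw [hF x, hF y,
      ← intervalIntegral.integral_add_adjacent_intervals
        (hc.intervalIntegrable 0 x) (hc.intervalIntegrable x y)]
    ring
  -- positivity of the key quantity
  set Φ : ℕ → ℝ := fun j =>
    (a (v j) - a (v i)) * ((a (v j) + a (v i)) * (v j - v i) - 2 * (F (v j) - F (v i)))
    with hΦdef
  have hkeylt : ∀ x y : ℝ, x < y →
      0 < (a y - a x) * ((a y + a x) * (y - x) - 2 * (F y - F x)) := by
    intro x y hxy
    have h1 : 0 < a y - a x := sub_pos.2 (hmono hxy)
    have h2 : 2 * (F y - F x) < (a y + a x) * (y - x) := by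
      rw [hFd x y]
      have := trap_aux a hc hconv hxy
      linarith
    exact mul_pos h1 (by linarith)
  have hΦpos : ∀ j : ℕ, v j ≠ v i → 0 < Φ j := by
    intro j hne
    rcases lt_or_gt_of_ne hne with h | h
    · have heq : Φ j = (a (v i) - a (v j)) *
          ((a (v i) + a (v j)) * (v i - v j) - 2 * (F (v i) - F (v j))) := by
        simp only [hΦdef]; ring
      rw [heq]
      exact hkeylt (v j) (v i) h
    · have heq : Φ j = (a (v j) - a (v i)) *
          ((a (v j) + a (v i)) * (v j - v i) - 2 * (F (v j) - F (v i))) := by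
        simp only [hΦdef]
      rw [heq]
      exact hkeylt (v i) (v j) h
  have hΦzero : ∀ j : ℕ, v j = v i → Φ j = 0 := by
    intro j hje; rw [hΦdef]; simp [hje]
  -- determinant formulas
  have hD : ∀ j ∈ Finset.Icc 1 N, ((X j - X i).submatrix ![0, 1] id).det
      = (a (v j) - a (v i)) * (v j - v i) - (u j - u i)^2 := by
    intro j hj
    rw [hX j hj, hX i hi]
    rw [Matrix.det_fin_two]
    simp [Matrix.submatrix_apply]
    try ring
  have hE : ∀ j ∈ Finset.Icc 1 N, ((X j - X i).submatrix ![0, 2] id).det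
      = (a (v j) - a (v i)) * ((u j)^2/2 + F (v j) - ((u i)^2/2 + F (v i)))
        - (u j - u i) * (u j * a (v j) - u i * a (v i)) := by
    intro j hj
    rw [hX j hj, hX i hi]
    rw [Matrix.det_fin_two]
    simp [Matrix.submatrix_apply]
    try ring
  -- the key algebraic identity, summed
  have hsum : ∑ j ∈ Finset.Icc 1 N,
      t j * a (v j) * ((X j - X i).submatrix ![0, 1] id).det
      = ∑ j ∈ Finset.Icc 1 N,
        (-(a (v i)) * (t j * ((X j - X i).submatrix ![0, 1] id).det)
          + 2 * (t j * ((X j - X i).submatrix ![0, 2] id).det)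
          + t j * Φ j) := by
    refine Finset.sum_congr rfl fun j hj => ?_
    rw [hD j hj, hE j hj, hΦdef]
    ring
  rw [hsum, Finset.sum_add_distrib, Finset.sum_add_distrib,
    ← Finset.mul_sum, ← Finset.mul_sum, h12, h13]
  simp only [mul_zero, zero_add]
  -- the remaining sum is positive
  obtain ⟨j, hj, l, hl, hjl⟩ := hv
  have hnonneg : ∀ k ∈ Finset.Icc 1 N, 0 ≤ t k * Φ k := by
    intro k hk
    by_cases hke : v k = v i
    · rw [hΦzero k hke, mul_zero]
    · exact le_of_lt (mul_pos (ht k hk) (hΦpos k hke))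
  have hex : ∃ k ∈ Finset.Icc 1 N, 0 < t k * Φ k := by
    by_cases hje : v j = v i
    · exact ⟨l, hl, mul_pos (ht l hl) (hΦpos l (by rw [hje] at hjl; exact fun h => hjl h.symm))⟩
    · exact ⟨j, hj, mul_pos (ht j hj) (hΦpos j hje)⟩
  obtain ⟨k, hk, hkpos⟩ := hex
  exact Finset.sum_pos' hnonneg ⟨k, hk, hkpos⟩
end
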